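/- arXiv:2004.06211 — 2 statements merged into one kernel-verified Lean document; each statement's English description precedes it below -/
import Mathlib

section
/- Let n ≥ 2 and U_h = P_h[χ_{S_+^{n-1}} − χ_{S_-^{n-1}}], the invariant Poisson integral of the difference of indicator functions of the upper and lower hemispheres. Then for 0 ≤ r < 1, inf over a ≥ 0 of ∫_{S^{n-1}} |P_h(r e_n, η) − a| dσ(η) equals U_h(r e_n), and the infimum is attained at a* = ((1-r^2)/(1+r^2))^{n-1}. -/
/-!
The hemisphere difference `s = χ₊ - χ₋` is odd under the reflection `η_n ↦ -η_n`, which preserves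
`σ`, so `∫ s dσ = 0`. Hence for every `a`, `U_h(re_n) = ∫ (P_h - a) s dσ ≤ ∫ |P_h - a| dσ`, as
`|s| ≤ 1`. On the sphere `P_h(re_n, η) = ((1 - r²) / (1 + r² - 2rη_n))^(n-1)` is monotone in `η_n`
and equals `a*` on the equator, so `P_h - a*` has the sign of `s` and the inequality is an equality
at `a = a*`.
-/

open MeasureTheory Metric Real Set

noncomputable section

/-- Poisson–Szegő kernel `P_h(x,ζ) = ((1-|x|²)/|x-ζ|²)^(n-1)`. -/
def Ph (n : ℕ) (x ζ : EuclideanSpace ℝ (Fin n)) : ℝ :=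
  ((1 - ‖x‖ ^ 2) / ‖x - ζ‖ ^ 2) ^ (n - 1)

/-- The vector `e_n = (0,…,0,1)`. -/
def eLast (n : ℕ) : EuclideanSpace ℝ (Fin n) :=
  if h : 0 < n then EuclideanSpace.single (⟨n - 1, by omega⟩ : Fin n) (1 : ℝ) else 0

/-- The unit sphere `S^{n-1}` in `ℝⁿ`. -/
abbrev Sph (n : ℕ) := Metric.sphere (0 : EuclideanSpace ℝ (Fin n)) 1

/-- Normalized surface measure `σ` on the unit sphere, `σ(S^{n-1}) = 1`. -/
def sphereMeasure (n : ℕ) : Measure (Sph n) :=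
  ((volume : Measure (EuclideanSpace ℝ (Fin n))).toSphere Set.univ)⁻¹ •
    (volume : Measure (EuclideanSpace ℝ (Fin n))).toSphere

/-- Last coordinate `η_n` of a vector in `ℝⁿ`. -/
def lastCoord (n : ℕ) (η : EuclideanSpace ℝ (Fin n)) : ℝ :=
  if h : 0 < n then η (⟨n - 1, by omega⟩ : Fin n) else 0

/-- `χ_{S₊^{n-1}} - χ_{S₋^{n-1}}`, difference of the indicators of the closed
upper and lower hemispheres. -/
def hemiDiff (n : ℕ) (η : EuclideanSpace ℝ (Fin n)) : ℝ :=
  (if 0 ≤ lastCoord n η then (1 : ℝ) else 0) - (if lastCoord n η ≤ 0 then (1 : ℝ) else 0)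

/-- `U_h = P_h[χ_{S₊^{n-1}} - χ_{S₋^{n-1}}]`, the invariant Poisson integral of the
difference of hemisphere indicators. -/
def Uh (n : ℕ) (x : EuclideanSpace ℝ (Fin n)) : ℝ :=
  ∫ η : Sph n, Ph n x η.1 * hemiDiff n η.1 ∂ sphereMeasure n

open scoped Pointwise InnerProductSpace

section SignedL1

variable {α : Type*} [MeasurableSpace α] {μ : Measure α} [IsFiniteMeasure μ] {f s : α → ℝ}

theorem integral_sub_const_mul_eq_of_integral_eq_zero (hf : Integrable f μ)
    (hs : AEStronglyMeasurable s μ) (hs_le : ∀ x, |s x| ≤ 1) (hs_zero : ∫ x, s x ∂μ = 0)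
    (a : ℝ) : ∫ x, (f x - a) * s x ∂μ = ∫ x, f x * s x ∂μ := by
  have hs_int : Integrable s μ := (integrable_const 1).mono' hs (ae_of_all _ hs_le)
  have hfs : Integrable (fun x => f x * s x) μ := hf.mul_bdd hs (ae_of_all _ hs_le)
  simp_rw [sub_mul]
  rw [integral_sub hfs (hs_int.const_mul a), integral_const_mul, hs_zero, mul_zero, sub_zero]

theorem integral_mul_le_integral_abs_sub (hf : Integrable f μ)
    (hs : AEStronglyMeasurable s μ) (hs_le : ∀ x, |s x| ≤ 1) (hs_zero : ∫ x, s x ∂μ = 0)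
    (a : ℝ) : ∫ x, f x * s x ∂μ ≤ ∫ x, |f x - a| ∂μ := by
  have hfa : Integrable (fun x => f x - a) μ := hf.sub (integrable_const a)
  rw [← integral_sub_const_mul_eq_of_integral_eq_zero hf hs hs_le hs_zero a]
  refine integral_mono (hfa.mul_bdd hs (ae_of_all _ hs_le)) hfa.abs fun x => ?_
  calc (f x - a) * s x ≤ |(f x - a) * s x| := le_abs_self _
    _ = |f x - a| * |s x| := abs_mul _ _
    _ ≤ |f x - a| := mul_le_of_le_one_right (abs_nonneg _) (hs_le x)

theorem integral_abs_sub_eq_integral_mul (hf : Integrable f μ)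
    (hs : AEStronglyMeasurable s μ) (hs_le : ∀ x, |s x| ≤ 1) (hs_zero : ∫ x, s x ∂μ = 0)
    {a : ℝ} (h : ∀ x, |f x - a| = (f x - a) * s x) :
    ∫ x, |f x - a| ∂μ = ∫ x, f x * s x ∂μ := by
  simp_rw [h]
  exact integral_sub_const_mul_eq_of_integral_eq_zero hf hs hs_le hs_zero a

theorem isLeast_integral_abs_sub (hf : Integrable f μ)
    (hs : AEStronglyMeasurable s μ) (hs_le : ∀ x, |s x| ≤ 1) (hs_zero : ∫ x, s x ∂μ = 0)
    {S : Set ℝ} {a₀ : ℝ} (ha₀ : a₀ ∈ S) (h : ∀ x, |f x - a₀| = (f x - a₀) * s x) :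
    IsLeast ((fun a => ∫ x, |f x - a| ∂μ) '' S) (∫ x, f x * s x ∂μ) := by
  refine ⟨⟨a₀, ha₀, integral_abs_sub_eq_integral_mul hf hs hs_le hs_zero h⟩, ?_⟩
  rintro _ ⟨a, -, rfl⟩
  exact integral_mul_le_integral_abs_sub hf hs hs_le hs_zero a

end SignedL1

theorem MeasureTheory.MeasurePreserving.integral_eq_zero_of_comp_eq_neg {α : Type*}
    [MeasurableSpace α] {μ : Measure α} {e : α ≃ᵐ α} (he : MeasurePreserving e μ μ)
    {g : α → ℝ} (hg : ∀ x, g (e x) = -g x) : ∫ x, g x ∂μ = 0 := by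
  have h := he.integral_comp' g
  simp only [hg, integral_neg] at h
  linarith

namespace LinearIsometryEquiv

variable {E : Type*} [NormedAddCommGroup E] [NormedSpace ℝ E]

theorem smul_preimage_eq_preimage_smul (L : E ≃ₗᵢ[ℝ] E) (S : Set ℝ) (A : Set E) :
    S • (L ⁻¹' A) = L ⁻¹' (S • A) := by
  ext x
  simp only [Set.mem_smul, Set.mem_preimage]
  constructor
  · rintro ⟨c, hc, y, hy, rfl⟩
    exact ⟨c, hc, L y, hy, (_root_.map_smul L c y).symm⟩
  · rintro ⟨c, hc, z, hz, h⟩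
    exact ⟨c, hc, L.symm z, by simpa using hz, L.injective (by simp [h])⟩

variable [MeasurableSpace E] [BorelSpace E]

def unitSphereEquiv (L : E ≃ₗᵢ[ℝ] E) : sphere (0 : E) 1 ≃ᵐ sphere (0 : E) 1 :=
  (L.toHomeomorph.subtype fun x => by simp).toMeasurableEquiv

theorem image_val_preimage_unitSphereEquiv (L : E ≃ₗᵢ[ℝ] E) (s : Set (sphere (0 : E) 1)) :
    Subtype.val '' (L.unitSphereEquiv ⁻¹' s) = L ⁻¹' (Subtype.val '' s) := by
  ext x
  simp only [unitSphereEquiv, Homeomorph.toMeasurableEquiv_coe, mem_image, mem_preimage,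
    Subtype.exists, mem_sphere_iff_norm, sub_zero, exists_and_right, exists_eq_right, norm_map]
  rfl

theorem measurePreserving_unitSphereEquiv {μ : Measure E} (L : E ≃ₗᵢ[ℝ] E)
    (hL : MeasurePreserving L μ μ) :
    MeasurePreserving L.unitSphereEquiv μ.toSphere μ.toSphere := by
  refine ⟨L.unitSphereEquiv.measurable, Measure.ext fun s hs => ?_⟩
  rw [Measure.map_apply L.unitSphereEquiv.measurable hs,
    Measure.toSphere_apply' _ (L.unitSphereEquiv.measurable hs), Measure.toSphere_apply' _ hs,
    image_val_preimage_unitSphereEquiv, smul_preimage_eq_preimage_smul]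
  exact congrArg _ (hL.measure_preimage_equiv (f := L.toHomeomorph.toMeasurableEquiv) _)

end LinearIsometryEquiv

instance (n : ℕ) : IsFiniteMeasure (sphereMeasure n) where
  measure_univ_lt_top := by
    rw [sphereMeasure, Measure.smul_apply, smul_eq_mul]
    exact (ENNReal.inv_mul_le_one _).trans_lt ENNReal.one_lt_top

section Hemispheres

variable {n : ℕ}

theorem continuous_lastCoord : Continuous (lastCoord n) := by
  unfold lastCoord
  split_ifs <;> fun_prop

theorem measurable_hemiDiff : Measurable (hemiDiff n) :=
  (Measurable.ite (measurableSet_le measurable_const continuous_lastCoord.measurable)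
    measurable_const measurable_const).sub
  (Measurable.ite (measurableSet_le continuous_lastCoord.measurable measurable_const)
    measurable_const measurable_const)

theorem abs_hemiDiff_le_one (x : EuclideanSpace ℝ (Fin n)) : |hemiDiff n x| ≤ 1 := by
  unfold hemiDiff
  split_ifs <;> norm_num

theorem hemiDiff_eq_neg_of_lastCoord_eq_neg {x y : EuclideanSpace ℝ (Fin n)}
    (h : lastCoord n y = -lastCoord n x) : hemiDiff n y = -hemiDiff n x := by
  rcases lt_trichotomy (lastCoord n x) 0 with hx | hx | hx
  · simp [hemiDiff, h, hx.le, not_le.2 hx]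
  · simp [hemiDiff, h, hx]
  · simp [hemiDiff, h, hx.le, not_le.2 hx]

theorem abs_eq_mul_hemiDiff {x : EuclideanSpace ℝ (Fin n)} {u : ℝ}
    (h₁ : 0 ≤ lastCoord n x → 0 ≤ u) (h₂ : lastCoord n x ≤ 0 → u ≤ 0) :
    |u| = u * hemiDiff n x := by
  rcases lt_trichotomy (lastCoord n x) 0 with hx | hx | hx
  · simp [hemiDiff, hx.le, not_le.2 hx, abs_of_nonpos (h₂ hx.le)]
  · simp [le_antisymm (h₂ hx.le) (h₁ hx.ge)]
  · simp [hemiDiff, hx.le, not_le.2 hx, abs_of_nonneg (h₁ hx.le)]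

def reflLast (n : ℕ) : EuclideanSpace ℝ (Fin n) ≃ₗᵢ[ℝ] EuclideanSpace ℝ (Fin n) :=
  LinearIsometryEquiv.piLpCongrRight 2 fun i =>
    if (i : ℕ) = n - 1 then LinearIsometryEquiv.neg ℝ else LinearIsometryEquiv.refl ℝ ℝ

theorem lastCoord_reflLast (x : EuclideanSpace ℝ (Fin n)) :
    lastCoord n (reflLast n x) = -lastCoord n x := by
  unfold lastCoord
  split_ifs <;> simp [reflLast]

theorem integral_hemiDiff_eq_zero : ∫ η : Sph n, hemiDiff n η ∂sphereMeasure n = 0 := by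
  have h := ((reflLast n).measurePreserving_unitSphereEquiv
    (reflLast n).measurePreserving).smul_measure
      ((volume : Measure (EuclideanSpace ℝ (Fin n))).toSphere univ)⁻¹
  exact h.integral_eq_zero_of_comp_eq_neg fun η =>
    hemiDiff_eq_neg_of_lastCoord_eq_neg (lastCoord_reflLast η.1)

end Hemispheres

section PoissonKernel

variable {n : ℕ}

theorem continuous_Ph_sphere {x : EuclideanSpace ℝ (Fin n)} (hx : ‖x‖ ≠ 1) :
    Continuous fun η : Sph n => Ph n x η := by
  unfold Ph
  refine (continuous_const.div (by fun_prop) fun η => ?_).pow _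
  have hη : ‖(η : EuclideanSpace ℝ (Fin n))‖ = 1 := by simp
  exact pow_ne_zero 2 (norm_ne_zero_iff.2 (sub_ne_zero.2 fun h => hx (h ▸ hη)))

theorem integrable_Ph_sphere {x : EuclideanSpace ℝ (Fin n)} (hx : ‖x‖ ≠ 1) :
    Integrable (fun η : Sph n => Ph n x η) (sphereMeasure n) :=
  (continuous_Ph_sphere hx).integrable_of_hasCompactSupport (.of_compactSpace _)

theorem inner_eLast (hn : 0 < n) (x : EuclideanSpace ℝ (Fin n)) :
    ⟪eLast n, x⟫_ℝ = lastCoord n x := by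
  simp [eLast, lastCoord, hn, EuclideanSpace.inner_single_left]

theorem norm_smul_eLast (hn : 0 < n) (r : ℝ) : ‖r • eLast n‖ = |r| := by
  simp [eLast, hn, norm_smul]

theorem norm_smul_eLast_sub_sq (hn : 0 < n) (r : ℝ) (x : EuclideanSpace ℝ (Fin n)) :
    ‖r • eLast n - x‖ ^ 2 = r ^ 2 - 2 * r * lastCoord n x + ‖x‖ ^ 2 := by
  rw [norm_sub_sq_real, norm_smul_eLast hn, sq_abs, real_inner_smul_left, inner_eLast hn]
  ring

theorem Ph_smul_eLast (hn : 0 < n) (r : ℝ) {η : EuclideanSpace ℝ (Fin n)} (hη : ‖η‖ = 1) :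
    Ph n (r • eLast n) η = ((1 - r ^ 2) / (1 + r ^ 2 - 2 * r * lastCoord n η)) ^ (n - 1) := by
  rw [Ph, norm_smul_eLast_sub_sq hn, norm_smul_eLast hn, sq_abs, hη]
  ring_nf

theorem one_add_sq_sub_two_mul_lastCoord_pos (hn : 0 < n) {r : ℝ} (hr : |r| < 1) {η : EuclideanSpace ℝ (Fin n)}
    (hη : ‖η‖ = 1) : 0 < 1 + r ^ 2 - 2 * r * lastCoord n η := by
  have hne : r • eLast n - η ≠ 0 := fun h => by
    rw [sub_eq_zero] at h
    simp [← h, norm_smul_eLast hn] at hη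
    linarith
  have := norm_smul_eLast_sub_sq hn r η
  rw [hη] at this
  linarith [pow_pos (norm_pos_iff.2 hne) 2]

variable (hn : 0 < n) {r : ℝ} (hr0 : 0 ≤ r) (hr1 : r < 1) {η : EuclideanSpace ℝ (Fin n)}
  (hη : ‖η‖ = 1)
include hn hr0 hr1 hη

theorem pow_le_Ph_smul_eLast (ht : 0 ≤ lastCoord n η) :
    ((1 - r ^ 2) / (1 + r ^ 2)) ^ (n - 1) ≤ Ph n (r • eLast n) η := by
  have hD := one_add_sq_sub_two_mul_lastCoord_pos hn (abs_lt.2 ⟨by linarith, hr1⟩) hη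
  have hc : 0 ≤ 1 - r ^ 2 := by nlinarith
  rw [Ph_smul_eLast hn r hη]
  gcongr
  nlinarith [mul_nonneg hr0 ht]

theorem Ph_smul_eLast_le_pow (ht : lastCoord n η ≤ 0) :
    Ph n (r • eLast n) η ≤ ((1 - r ^ 2) / (1 + r ^ 2)) ^ (n - 1) := by
  have hD := one_add_sq_sub_two_mul_lastCoord_pos hn (abs_lt.2 ⟨by linarith, hr1⟩) hη
  have hc : 0 ≤ 1 - r ^ 2 := by nlinarith
  rw [Ph_smul_eLast hn r hη]
  gcongr
  nlinarith [mul_nonpos_of_nonneg_of_nonpos hr0 ht]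

theorem abs_Ph_smul_eLast_sub_eq_mul_hemiDiff :
    |Ph n (r • eLast n) η - ((1 - r ^ 2) / (1 + r ^ 2)) ^ (n - 1)|
      = (Ph n (r • eLast n) η - ((1 - r ^ 2) / (1 + r ^ 2)) ^ (n - 1)) * hemiDiff n η :=
  abs_eq_mul_hemiDiff (fun ht => sub_nonneg.2 (pow_le_Ph_smul_eLast hn hr0 hr1 hη ht))
    (fun ht => sub_nonpos.2 (Ph_smul_eLast_le_pow hn hr0 hr1 hη ht))

end PoissonKernel

/-- `inf_{a ≥ 0} ∫ |P_h(re_n,η) - a| dσ = U_h(re_n)`, attained at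
`a* = ((1-r²)/(1+r²))^{n-1}`. -/
theorem stmt12 (n : ℕ) (hn : 2 ≤ n) (r : ℝ) (hr0 : 0 ≤ r) (hr1 : r < 1) :
    IsLeast ((fun a : ℝ => ∫ η : Sph n, |Ph n (r • eLast n) η.1 - a| ∂ sphereMeasure n) ''
        Set.Ici (0 : ℝ))
      (Uh n (r • eLast n)) ∧
    (∫ η : Sph n, |Ph n (r • eLast n) η.1 - ((1 - r ^ 2) / (1 + r ^ 2)) ^ (n - 1)|
        ∂ sphereMeasure n)
      = Uh n (r • eLast n) := by
  have hn0 : 0 < n := by omega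
  have hx : ‖r • eLast n‖ ≠ 1 := by
    rw [norm_smul_eLast hn0, abs_of_nonneg hr0]
    exact hr1.ne
  have hP := integrable_Ph_sphere hx
  have hs : AEStronglyMeasurable (fun η : Sph n => hemiDiff n η) (sphereMeasure n) :=
    (measurable_hemiDiff.comp measurable_subtype_coe).aestronglyMeasurable
  have hs_le (η : Sph n) : |hemiDiff n η| ≤ 1 := abs_hemiDiff_le_one η.1
  have hsign (η : Sph n) :=
    abs_Ph_smul_eLast_sub_eq_mul_hemiDiff hn0 hr0 hr1 (by simp : ‖η.1‖ = 1)
  have ha : 0 ≤ ((1 - r ^ 2) / (1 + r ^ 2)) ^ (n - 1) := by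
    have : 0 ≤ 1 - r ^ 2 := by nlinarith
    positivity
  exact ⟨isLeast_integral_abs_sub hP hs hs_le integral_hemiDiff_eq_zero (mem_Ici.2 ha) hsign,
    integral_abs_sub_eq_integral_mul hP hs hs_le integral_hemiDiff_eq_zero hsign⟩
end
end

section
/- For n = 3 and 0 ≤ r < 1, U_h(r e_3) = 2r/(1+r^2), where U_h = P_h[χ_{S_+^2} − χ_{S_-^2}] is the invariant Poisson integral in the unit ball of ℝ^3 of the difference of hemisphere indicators. -/
/-!
The key fact is Archimedes' hat-box theorem: the image of the surface measure of `S²` under a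
coordinate `η ↦ ηᵢ` is `2π` times Lebesgue measure on `[-1, 1]`. On the sphere,
`P_h(r e₃, η) = ((1 - r²) / (1 + r² - 2 r η₃))²` depends on `η₃` only, and
`χ_{S₊²} - χ_{S₋²} = sign η₃`, so `U_h(r e₃)` is half of a one-variable integral over
`[-1, 1]` that has an explicit primitive.

The hat-box theorem is proved by passing from the sphere to the ball in polar coordinates and
then using cylindrical coordinates `(z, ρ)` around the `i`-th axis: the substitution
`s = √(z² + ρ²)` and a swap of the `z` and `s` integrals turn the ball integral of
`g(xᵢ / ‖x‖)` into `∫₀¹ s² ds · ∫₋₁¹ g`.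
-/


open MeasureTheory Metric Real Set

noncomputable section

local notation "ℝ³" => EuclideanSpace ℝ (Fin 3)

section Polar

variable {E : Type*} [NormedAddCommGroup E] [NormedSpace ℝ E] [FiniteDimensional ℝ E]
  [MeasurableSpace E] [BorelSpace E] [Nontrivial E] (μ : Measure E) [μ.IsAddHaarMeasure]

theorem MeasureTheory.Measure.integral_indicator_Iio_one_volumeIoiPow (n : ℕ) :
    ∫ t, (Iio ⟨1, mem_Ioi.2 one_pos⟩ : Set (Ioi (0 : ℝ))).indicator
      (1 : Ioi (0 : ℝ) → ℝ) t ∂Measure.volumeIoiPow n = 1 / (n + 1 : ℝ) := by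
  rw [integral_indicator_one measurableSet_Iio, measureReal_def,
    Measure.volumeIoiPow_apply_Iio, ENNReal.toReal_ofReal (by positivity)]
  simp

theorem MeasureTheory.Measure.integral_ball_comp_smul_inv_norm (f : E → ℝ) :
    ∫ x in ball (0 : E) 1, f (‖x‖⁻¹ • x) ∂μ
      = (Module.finrank ℝ E : ℝ)⁻¹ * ∫ η : sphere (0 : E) 1, f η ∂μ.toSphere := by
  have hd : 0 < Module.finrank ℝ E := Module.finrank_pos
  calc ∫ x in ball (0 : E) 1, f (‖x‖⁻¹ • x) ∂μ
      = ∫ x : ({0}ᶜ : Set E), (ball (0 : E) 1).indicator (fun x => f (‖x‖⁻¹ • x)) x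
          ∂μ.comap Subtype.val := by
        rw [integral_subtype_comap (measurableSet_singleton _).compl, restrict_compl_singleton,
          integral_indicator measurableSet_ball]
    _ = ∫ p : sphere (0 : E) 1 × Ioi (0 : ℝ),
          f p.1 * (Iio ⟨1, mem_Ioi.2 one_pos⟩ : Set (Ioi (0 : ℝ))).indicator
            (1 : Ioi (0 : ℝ) → ℝ) p.2
          ∂μ.toSphere.prod (Measure.volumeIoiPow (Module.finrank ℝ E - 1)) := by
        rw [← μ.measurePreserving_homeomorphUnitSphereProd.integral_comp
          (Homeomorph.measurableEmbedding _)]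
        refine integral_congr_ae (Filter.Eventually.of_forall fun x => ?_)
        have hlt :
            (homeomorphUnitSphereProd E x).2 < ⟨1, mem_Ioi.2 one_pos⟩ ↔ ‖(x : E)‖ < 1 := by
          rw [← Subtype.coe_lt_coe, homeomorphUnitSphereProd_apply_snd_coe]
        simp only [indicator, mem_ball_zero_iff, mem_Iio, hlt,
          homeomorphUnitSphereProd_apply_fst_coe]
        split_ifs <;> simp
    _ = _ := by
        rw [integral_prod_mul (fun η : sphere (0 : E) 1 => f η),
          Measure.integral_indicator_Iio_one_volumeIoiPow, Nat.cast_sub hd]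
        push_cast
        ring

end Polar

def EuclideanSpace.splitAt {n : ℕ} (i : Fin (n + 1)) :
    EuclideanSpace ℝ (Fin (n + 1)) ≃ᵐ ℝ × EuclideanSpace ℝ (Fin n) :=
  ((MeasurableEquiv.toLp 2 (Fin (n + 1) → ℝ)).symm.trans
    (MeasurableEquiv.piFinSuccAbove (fun _ => ℝ) i)).trans
    (MeasurableEquiv.prodCongr (MeasurableEquiv.refl ℝ) (MeasurableEquiv.toLp 2 (Fin n → ℝ)))

namespace EuclideanSpace

variable {n : ℕ} (i : Fin (n + 1))

theorem splitAt_apply (x : EuclideanSpace ℝ (Fin (n + 1))) :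
    splitAt i x = (x i, WithLp.toLp 2 fun j => x (i.succAbove j)) := rfl

theorem measurePreserving_splitAt : MeasurePreserving (splitAt i) := by
  refine MeasurePreserving.trans ?_
    ((MeasurePreserving.id volume).prod (PiLp.volume_preserving_toLp _))
  exact (volume_preserving_piFinSuccAbove (fun _ => ℝ) i).comp
    (volume_preserving_symm_measurableEquiv_toLp _)

theorem norm_sq_eq_splitAt (x : EuclideanSpace ℝ (Fin (n + 1))) :
    ‖x‖ ^ 2 = (splitAt i x).1 ^ 2 + ‖(splitAt i x).2‖ ^ 2 := by
  simp only [splitAt_apply, EuclideanSpace.norm_sq_eq, Real.norm_eq_abs, sq_abs,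
    Fin.sum_univ_succAbove _ i]

end EuclideanSpace

theorem integral_Ioi_mul_comp_sqrt_sq_add_sq (z : ℝ) (f : ℝ → ℝ) :
    ∫ ρ in Ioi (0 : ℝ), ρ * f √(z ^ 2 + ρ ^ 2) = ∫ s in Ioi |z|, s * f s := by
  set φ : ℝ → ℝ := fun ρ => √(z ^ 2 + ρ ^ 2)
  have hpos : ∀ ρ ∈ Ioi (0 : ℝ), 0 < z ^ 2 + ρ ^ 2 := fun ρ hρ =>
    add_pos_of_nonneg_of_pos (sq_nonneg z) (pow_pos hρ 2)
  have hderiv : ∀ ρ ∈ Ioi (0 : ℝ), HasDerivWithinAt φ (ρ / φ ρ) (Ioi 0) ρ := by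
    intro ρ hρ
    have h := (((hasDerivAt_pow 2 ρ).const_add (z ^ 2)).sqrt (hpos ρ hρ).ne').hasDerivWithinAt
      (s := Ioi 0)
    refine h.congr_deriv ?_
    simp only [φ]
    field_simp
    norm_num
  have hinj : InjOn φ (Ioi 0) := by
    intro a ha b hb hab
    have := congrArg (· ^ 2) hab
    simp only [φ, Real.sq_sqrt (hpos a ha).le, Real.sq_sqrt (hpos b hb).le] at this
    have ha' : (0 : ℝ) < a := ha
    have hb' : (0 : ℝ) < b := hb
    nlinarith
  have himage : φ '' Ioi 0 = Ioi |z| := by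
    ext s
    constructor
    · rintro ⟨ρ, hρ, rfl⟩
      rw [mem_Ioi, ← Real.sqrt_sq_eq_abs]
      exact Real.sqrt_lt_sqrt (sq_nonneg z) (lt_add_of_pos_right _ (pow_pos hρ 2))
    · intro hs
      have hs' : |z| < s := hs
      have hs0 : 0 ≤ s := (abs_nonneg z).trans hs'.le
      refine ⟨√(s ^ 2 - z ^ 2), Real.sqrt_pos.2 ?_, ?_⟩
      · nlinarith [sq_abs z, abs_nonneg z]
      · simp only [φ]
        rw [Real.sq_sqrt (by nlinarith [sq_abs z, abs_nonneg z]), add_sub_cancel,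
          Real.sqrt_sq hs0]
  rw [← himage, integral_image_eq_integral_abs_deriv_smul measurableSet_Ioi hderiv hinj]
  refine setIntegral_congr_fun measurableSet_Ioi fun ρ hρ => ?_
  have hφ : 0 < φ ρ := Real.sqrt_pos.2 (hpos ρ hρ)
  have hρ' : (0 : ℝ) < ρ := hρ
  rw [abs_of_pos (div_pos hρ' hφ), smul_eq_mul]
  field_simp
  rfl

theorem EuclideanSpace.integral_fin_three_eq_cylindrical (i : Fin 3) (F : ℝ → ℝ → ℝ)
    (hF : Integrable fun x : ℝ³ => F (x i) ‖x‖) :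
    ∫ x : ℝ³, F (x i) ‖x‖ = 2 * π * ∫ z, ∫ s in Ioi |z|, s * F z s := by
  have hsplit : ∀ x : ℝ³,
      F (x i) ‖x‖ = F (splitAt i x).1 √((splitAt i x).1 ^ 2 + ‖(splitAt i x).2‖ ^ 2) := by
    intro x
    rw [← norm_sq_eq_splitAt, Real.sqrt_sq (norm_nonneg x)]
    rfl
  set G : ℝ × EuclideanSpace ℝ (Fin 2) → ℝ := fun p => F p.1 √(p.1 ^ 2 + ‖p.2‖ ^ 2)
  have hG : Integrable G := by
    rw [← (measurePreserving_splitAt i).integrable_comp_emb (splitAt i).measurableEmbedding]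
    exact hF.congr (Filter.Eventually.of_forall hsplit)
  calc ∫ x : ℝ³, F (x i) ‖x‖
      = ∫ p, G p := by
        simp_rw [hsplit]
        exact (measurePreserving_splitAt i).integral_comp' G
    _ = ∫ z, ∫ y : EuclideanSpace ℝ (Fin 2), F z √(z ^ 2 + ‖y‖ ^ 2) := by
        rw [Measure.volume_eq_prod]
        exact integral_prod G hG
    _ = _ := by
        rw [← integral_const_mul]
        congr 1 with z
        rw [integral_fun_norm_addHaar volume (fun ρ => F z √(z ^ 2 + ρ ^ 2)),
          ← integral_Ioi_mul_comp_sqrt_sq_add_sq]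
        simp [measureReal_def, ENNReal.toReal_ofReal pi_nonneg, mul_assoc]

theorem integral_comp_div_Ioo_self {g : ℝ → ℝ} {s : ℝ} (hs : 0 < s) :
    ∫ z in Ioo (-s) s, s * g (z / s) = s ^ 2 * ∫ t in (-1 : ℝ)..1, g t := by
  rw [← integral_Ioc_eq_integral_Ioo, ← intervalIntegral.integral_of_le (by linarith),
    intervalIntegral.integral_const_mul, intervalIntegral.integral_comp_div g hs.ne',
    neg_div, div_self hs.ne', smul_eq_mul]
  ring

theorem integral_integral_Ioi_abs_mul_comp_div {g : ℝ → ℝ} (hg : Measurable g) {C : ℝ}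
    (hC : ∀ t ∈ Icc (-1 : ℝ) 1, |g t| ≤ C) :
    ∫ z, ∫ s in Ioi |z|, s * (if s < 1 then g (z / s) else 0)
      = (∫ t in (-1 : ℝ)..1, g t) / 3 := by
  set A : Set (ℝ × ℝ) := {p | |p.1| < p.2 ∧ p.2 < 1}
  set Q : ℝ × ℝ → ℝ := A.indicator fun p => p.2 * g (p.1 / p.2)
  have hA : MeasurableSet A :=
    (measurableSet_lt measurable_fst.abs measurable_snd).inter
      (measurableSet_lt measurable_snd measurable_const)
  have hQ : Integrable Q := by
    refine (integrable_indicator_iff hA).2 (Measure.integrableOn_of_bounded ?_ ?_ (M := C) ?_)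
    · refine ((measure_mono fun p hp => ?_).trans_lt
        (measure_Icc_lt_top (a := ((-1 : ℝ), (0 : ℝ))) (b := (1, 1)))).ne
      obtain ⟨h1, h2⟩ := hp
      have := abs_lt.1 (h1.trans h2)
      exact ⟨⟨this.1.le, ((abs_nonneg _).trans h1.le)⟩, ⟨this.2.le, h2.le⟩⟩
    · fun_prop
    · refine ae_restrict_of_forall_mem hA fun p ⟨h1, h2⟩ => ?_
      have hs : 0 < p.2 := (abs_nonneg _).trans_lt h1
      have hgp : |g (p.1 / p.2)| ≤ C := hC _ (abs_le.1 (by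
        rw [abs_div, abs_of_pos hs, div_le_one hs]; exact h1.le))
      rw [Real.norm_eq_abs, abs_mul, abs_of_pos hs]
      nlinarith [abs_nonneg (g (p.1 / p.2))]
  have hinner : ∀ z,
      ∫ s in Ioi |z|, s * (if s < 1 then g (z / s) else 0) = ∫ s, Q (z, s) := by
    intro z
    rw [← integral_indicator measurableSet_Ioi]
    congr 1 with s
    by_cases h : |z| < s <;> by_cases h' : s < 1 <;> simp [Q, A, h, h']
  have hswap : ∀ s,
      ∫ z, Q (z, s) = (Ioo 0 1).indicator (fun s => s ^ 2 * ∫ t in (-1 : ℝ)..1, g t) s := by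
    intro s
    by_cases hs : s ∈ Ioo (0 : ℝ) 1
    · rw [indicator_of_mem hs, ← integral_comp_div_Ioo_self hs.1,
        ← integral_indicator measurableSet_Ioo]
      congr 1 with z
      simp [Q, A, abs_lt, hs.2, indicator]
    · rw [indicator_of_notMem hs, ← integral_zero ℝ ℝ]
      congr 1 with z
      refine indicator_of_notMem (fun h => hs ⟨(abs_nonneg z).trans_lt h.1, h.2⟩) _
  simp_rw [hinner]
  rw [integral_integral_swap (f := fun z s => Q (z, s)) hQ]
  simp_rw [hswap]
  rw [integral_indicator measurableSet_Ioo, ← integral_Ioc_eq_integral_Ioo,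
    ← intervalIntegral.integral_of_le zero_le_one, intervalIntegral.integral_mul_const,
    integral_pow]
  norm_num
  ring

theorem EuclideanSpace.integral_toSphere_fin_three_comp_apply (i : Fin 3) {g : ℝ → ℝ}
    (hg : Measurable g) {C : ℝ} (hC : ∀ t ∈ Icc (-1 : ℝ) 1, |g t| ≤ C) :
    ∫ η : sphere (0 : ℝ³) 1, g ((η : ℝ³) i) ∂(volume : Measure ℝ³).toSphere
      = 2 * π * ∫ t in (-1 : ℝ)..1, g t := by
  set F : ℝ → ℝ → ℝ := fun z s => if s < 1 then g (z / s) else 0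
  have hF_eq : (fun x : ℝ³ => F (x i) ‖x‖)
      = (ball 0 1).indicator fun x => g (x i / ‖x‖) := by
    ext x
    by_cases hx : ‖x‖ < 1 <;> simp [F, indicator, hx]
  have hF : Integrable fun x : ℝ³ => F (x i) ‖x‖ := by
    rw [hF_eq, integrable_indicator_iff measurableSet_ball]
    refine Measure.integrableOn_of_bounded measure_ball_lt_top.ne
      (hg.comp (by fun_prop)).aestronglyMeasurable (M := C) ?_
    refine Filter.Eventually.of_forall fun x => hC _ (abs_le.1 ?_)
    rw [abs_div, abs_norm]
    exact div_le_one_of_le₀ (PiLp.norm_apply_le x i) (norm_nonneg x)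
  have hball : ∫ x in ball (0 : ℝ³) 1, g ((‖x‖⁻¹ • x) i) = ∫ x : ℝ³, F (x i) ‖x‖ := by
    simp_rw [hF_eq, integral_indicator measurableSet_ball, PiLp.smul_apply, smul_eq_mul,
      inv_mul_eq_div]
  have h := volume.integral_ball_comp_smul_inv_norm fun x : ℝ³ => g (x i)
  rw [hball, integral_fin_three_eq_cylindrical i F hF,
    integral_integral_Ioi_abs_mul_comp_div hg hC, finrank_euclideanSpace_fin] at h
  push_cast at h
  linarith

theorem Real.measurable_sign : Measurable Real.sign :=
  Measurable.ite measurableSet_Iio measurable_const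
    (Measurable.ite measurableSet_Ioi measurable_const measurable_const)

def poissonProfile (r t : ℝ) : ℝ := ((1 - r ^ 2) / (1 + r ^ 2 - 2 * r * t)) ^ 2

theorem measurable_sign_mul_poissonProfile (r : ℝ) :
    Measurable fun t => Real.sign t * poissonProfile r t :=
  Real.measurable_sign.mul (by unfold poissonProfile; fun_prop)

section PoissonProfile

variable {r : ℝ}

theorem one_add_sq_sub_two_mul_pos (hr : |r| < 1) {t : ℝ} (ht : |t| ≤ 1) :
    0 < 1 + r ^ 2 - 2 * r * t := by
  have hrt : r * t ≤ |r| := by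
    calc r * t ≤ |r * t| := le_abs_self _
      _ = |r| * |t| := abs_mul r t
      _ ≤ |r| := mul_le_of_le_one_right (abs_nonneg r) ht
  nlinarith [sq_abs r, abs_nonneg r]

theorem continuousOn_poissonProfile (hr : |r| < 1) :
    ContinuousOn (poissonProfile r) (Icc (-1) 1) := by
  refine ((continuousOn_const.div (by fun_prop) fun t ht => ?_).pow 2)
  exact (one_add_sq_sub_two_mul_pos hr (abs_le.2 ht)).ne'

theorem exists_abs_sign_mul_poissonProfile_le (hr : |r| < 1) :
    ∃ C, ∀ t ∈ Icc (-1 : ℝ) 1, |Real.sign t * poissonProfile r t| ≤ C := by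
  obtain ⟨C, hC⟩ := isCompact_Icc.exists_bound_of_continuousOn (continuousOn_poissonProfile hr)
  refine ⟨C, fun t ht => ?_⟩
  rw [abs_mul]
  refine (mul_le_of_le_one_left (abs_nonneg _) ?_).trans (hC t ht)
  rcases Real.sign_apply_eq t with h | h | h <;> simp [h]

theorem integral_poissonProfile (hr : |r| < 1) {a b : ℝ} (ha : -1 ≤ a) (hab : a ≤ b)
    (hb : b ≤ 1) :
    ∫ t in a..b, poissonProfile r t
      = (1 - r ^ 2) ^ 2 * b / ((1 + r ^ 2) * (1 + r ^ 2 - 2 * r * b))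
        - (1 - r ^ 2) ^ 2 * a / ((1 + r ^ 2) * (1 + r ^ 2 - 2 * r * a)) := by
  have hsub : uIcc a b ⊆ Icc (-1) 1 := by
    rw [uIcc_of_le hab]
    exact Icc_subset_Icc ha hb
  refine intervalIntegral.integral_eq_sub_of_hasDerivAt
    (f := fun t => (1 - r ^ 2) ^ 2 * t / ((1 + r ^ 2) * (1 + r ^ 2 - 2 * r * t))) (fun t ht => ?_)
    ((continuousOn_poissonProfile hr).mono hsub).intervalIntegrable
  have hd := one_add_sq_sub_two_mul_pos hr (abs_le.2 (hsub ht))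
  have h := ((hasDerivAt_id t).const_mul ((1 - r ^ 2) ^ 2)).div
    ((((hasDerivAt_id t).const_mul (2 * r)).const_sub (1 + r ^ 2)).const_mul (1 + r ^ 2))
    (by positivity)
  refine h.congr_deriv ?_
  simp only [poissonProfile, id]
  field_simp
  ring

theorem integral_sign_mul_poissonProfile (hr : |r| < 1) :
    ∫ t in (-1 : ℝ)..1, Real.sign t * poissonProfile r t = 4 * r / (1 + r ^ 2) := by
  obtain ⟨C, hC⟩ := exists_abs_sign_mul_poissonProfile_le hr
  have hint : IntegrableOn (fun t => Real.sign t * poissonProfile r t) (Icc (-1) 1) :=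
    Measure.integrableOn_of_bounded measure_Icc_lt_top.ne
      (measurable_sign_mul_poissonProfile r).aestronglyMeasurable (M := C)
      (ae_restrict_of_forall_mem measurableSet_Icc hC)
  have hneg : ∫ t in (-1 : ℝ)..0, Real.sign t * poissonProfile r t
      = -∫ t in (-1 : ℝ)..0, poissonProfile r t := by
    rw [← intervalIntegral.integral_neg]
    refine intervalIntegral.integral_congr_ae ?_
    filter_upwards [Measure.ae_ne volume 0] with t ht0 ht
    rw [uIoc_of_le (by norm_num)] at ht
    rw [Real.sign_of_neg (lt_of_le_of_ne ht.2 ht0), neg_one_mul]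
  have hpos : ∫ t in (0 : ℝ)..1, Real.sign t * poissonProfile r t
      = ∫ t in (0 : ℝ)..1, poissonProfile r t := by
    refine intervalIntegral.integral_congr_ae (Filter.Eventually.of_forall fun t ht => ?_)
    rw [uIoc_of_le zero_le_one] at ht
    rw [Real.sign_of_pos ht.1, one_mul]
  rw [← intervalIntegral.integral_add_adjacent_intervals (b := 0)
    ((intervalIntegrable_iff_integrableOn_Icc_of_le (by norm_num)).2
      (hint.mono_set (Icc_subset_Icc le_rfl (by norm_num))))
    ((intervalIntegrable_iff_integrableOn_Icc_of_le (by norm_num)).2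
      (hint.mono_set (Icc_subset_Icc (by norm_num) le_rfl))), hneg, hpos,
    integral_poissonProfile hr le_rfl (by norm_num) (by norm_num),
    integral_poissonProfile hr (by norm_num) zero_le_one le_rfl]
  have h1 : (1 : ℝ) + r ^ 2 - 2 * r * 1 = (1 - r) ^ 2 := by ring
  have h2 : (1 : ℝ) + r ^ 2 - 2 * r * (-1) = (1 + r) ^ 2 := by ring
  have hr1 : 1 - r ≠ 0 := by linarith [le_abs_self r]
  have hr2 : 1 + r ≠ 0 := by linarith [neg_abs_le r]
  rw [h1, h2]
  field_simp
  ring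

end PoissonProfile

theorem hemiDiff_eq_sign (n : ℕ) (η : EuclideanSpace ℝ (Fin n)) :
    hemiDiff n η = Real.sign (lastCoord n η) := by
  rcases lt_trichotomy (lastCoord n η) 0 with h | h | h
  · simp [hemiDiff, Real.sign_of_neg h, h.le, h.not_ge]
  · simp [hemiDiff, h]
  · simp [hemiDiff, Real.sign_of_pos h, h.le, h.not_ge]

theorem lastCoord_three (η : ℝ³) : lastCoord 3 η = η 2 := rfl

theorem eLast_three : eLast 3 = EuclideanSpace.single 2 1 := rfl

theorem Ph_three_smul_eLast (r : ℝ) {η : ℝ³} (hη : ‖η‖ = 1) :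
    Ph 3 (r • eLast 3) η = poissonProfile r (η 2) := by
  have hnorm : ‖r • eLast 3‖ ^ 2 = r ^ 2 := by
    simp [eLast_three, norm_smul, sq_abs]
  have hinner : inner ℝ (r • eLast 3) η = r * η 2 := by
    simp [eLast_three, real_inner_smul_left, EuclideanSpace.inner_single_left]
  rw [Ph, norm_sub_sq_real, hnorm, hinner, hη, poissonProfile]
  ring_nf

theorem EuclideanSpace.toSphere_real_univ_fin_three :
    (volume : Measure ℝ³).toSphere.real univ = 4 * π := by
  rw [Measure.toSphere_real_apply_univ, measureReal_def, volume_ball_fin_three,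
    finrank_euclideanSpace_fin, ENNReal.ofReal_one, one_pow, one_mul,
    ENNReal.toReal_ofReal (by positivity)]
  ring

theorem Uh_three_smul_eLast (r : ℝ) :
    Uh 3 (r • eLast 3) = (4 * π)⁻¹ * ∫ η : sphere (0 : ℝ³) 1,
      Real.sign ((η : ℝ³) 2) * poissonProfile r ((η : ℝ³) 2)
        ∂(volume : Measure ℝ³).toSphere := by
  rw [Uh, sphereMeasure, integral_smul_measure, ENNReal.toReal_inv, ← measureReal_def,
    EuclideanSpace.toSphere_real_univ_fin_three, smul_eq_mul]
  congr 1
  refine integral_congr_ae (Filter.Eventually.of_forall fun η => ?_)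
  dsimp only
  rw [Ph_three_smul_eLast r (mem_sphere_zero_iff_norm.1 η.2), hemiDiff_eq_sign, lastCoord_three,
    mul_comm]

/-- for `n = 3`, `U_h(r e₃) = 2r/(1+r²)`. -/
theorem stmt13 (r : ℝ) (hr0 : 0 ≤ r) (hr1 : r < 1) :
    Uh 3 (r • eLast 3) = 2 * r / (1 + r ^ 2) := by
  have hr : |r| < 1 := abs_lt.2 ⟨by linarith, hr1⟩
  obtain ⟨C, hC⟩ := exists_abs_sign_mul_poissonProfile_le hr
  rw [Uh_three_smul_eLast, EuclideanSpace.integral_toSphere_fin_three_comp_apply 2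
    (measurable_sign_mul_poissonProfile r) hC, integral_sign_mul_poissonProfile hr]
  field_simp
end
end
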